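/- For every classical instance I = (A, ι^n) of unsigned strings, the string A can be transformed into ι^n by a sequence of at most b_τ(I) + |Σ_{ι^n} \ Σ_A| transpositions, insertions, and deletions; that is, d_{M^{φψ}_τ}(A, ι^n) ≤ b_τ(I) + |Σ_{ι^n} \ Σ_A|. -/

import Mathlib

/-- A gene of the origin string: either a label in `{1, …, n}` (`some x`) or an
`α`-element (`none`), i.e. a gene absent from the target genome. -/
abbrev Gene := Option ℕ

/-- `A` is a valid origin string for a classical instance `I = (A, ι^n)`:
all its labels lie in `{1, …, n}` and each label occurs at most once
(`α`-elements may repeat). -/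
def ValidString (n : ℕ) (A : List Gene) : Prop :=
  (∀ x : ℕ, some x ∈ A → 1 ≤ x ∧ x ≤ n) ∧ (∀ x : ℕ, A.count (some x) ≤ 1)

/-- The extended version of `A`: `A_0 = 0` and `A_{|A|+1} = n+1` are appended. -/
def extStr (n : ℕ) (A : List Gene) : List Gene :=
  some 0 :: (A ++ [some (n + 1)])

/-- `|Σ_{ι^n} \ Σ_A|`: the number of labels of the target absent from `A`. -/
def missingCount (n : ℕ) (A : List Gene) : ℕ :=
  ((Finset.Icc 1 n).filter (fun x => some x ∉ A)).card

/-- `posterior(x, I)`: the smallest common label greater than `x`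
(`n+1` if there is none, `α` for `x = α`). -/
def postOf (n : ℕ) (A : List Gene) : Gene → Gene
  | none => none
  | some x =>
    if h : ((Finset.Icc 1 n).filter (fun y => some y ∈ A ∧ x < y)).Nonempty then
      some (((Finset.Icc 1 n).filter (fun y => some y ∈ A ∧ x < y)).min' h)
    else
      some (n + 1)

/-- `anterior(x, I)`: the largest common label smaller than `x`
(`0` if there is none, `α` for `x = α`). -/
def antOf (n : ℕ) (A : List Gene) : Gene → Gene
  | none => none
  | some x =>
    if h : ((Finset.Icc 1 n).filter (fun y => some y ∈ A ∧ y < x)).Nonempty then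
      some (((Finset.Icc 1 n).filter (fun y => some y ∈ A ∧ y < x)).max' h)
    else
      some 0

/-- `b_τ(I)`: the number of transposition breakpoints of the instance `I = (A, ι^n)`. -/
def bT (n : ℕ) (A : List Gene) : ℕ :=
  ((Finset.range (A.length + 1)).filter (fun t =>
    (extStr n A).getD (t + 1) none ≠ postOf n A ((extStr n A).getD t none))).card

/-- `b_ρ(I)`: the number of unsigned-reversal breakpoints of the instance `I = (A, ι^n)`. -/
def bR (n : ℕ) (A : List Gene) : ℕ :=
  ((Finset.range (A.length + 1)).filter (fun t =>
    (extStr n A).getD (t + 1) none ≠ postOf n A ((extStr n A).getD t none) ∧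
    (extStr n A).getD (t + 1) none ≠ antOf n A ((extStr n A).getD t none))).card

/-- The reversal `ρ(i,j)`, `1 ≤ i ≤ j ≤ |A|`, with explicit parameters `i`, `j`:
it reverses the segment `(A_i … A_j)`, transforming `A` into `A'`. -/
def RevAt (A : List Gene) (i j : ℕ) (A' : List Gene) : Prop :=
  1 ≤ i ∧ i ≤ j ∧ j ≤ A.length ∧
  A' = A.take (i - 1) ++ ((A.drop (i - 1)).take (j - i + 1)).reverse ++ A.drop j

/-- `A'` is obtained from `A` by a reversal. -/
def RevN (A A' : List Gene) : Prop := ∃ i j : ℕ, RevAt A i j A'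

/-- `A'` is obtained from `A` by a transposition `τ(i,j,k)`, `1 ≤ i < j < k ≤ |A|+1`,
exchanging the adjacent segments `(A_i … A_{j−1})` and `(A_j … A_{k−1})`. -/
def TranspN (A A' : List Gene) : Prop :=
  ∃ i j k : ℕ, 1 ≤ i ∧ i < j ∧ j < k ∧ k ≤ A.length + 1 ∧
    A' = A.take (i - 1) ++ (A.drop (j - 1)).take (k - j) ++
         (A.drop (i - 1)).take (j - i) ++ A.drop (k - 1)

/-- `A'` is obtained from `A` by an insertion `φ(i,σ)`: a nonempty repetition-free
string `σ`, consisting only of labels of `Σ_{ι^n} \ Σ_A`, is inserted after position `i`. -/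
def InsN (n : ℕ) (A A' : List Gene) : Prop :=
  ∃ (i : ℕ) (σ : List Gene), i ≤ A.length ∧ σ ≠ [] ∧ σ.Nodup ∧
    (∀ e ∈ σ, ∃ x : ℕ, e = some x ∧ 1 ≤ x ∧ x ≤ n ∧ some x ∉ A) ∧
    A' = A.take i ++ σ ++ A.drop i

/-- `A'` is obtained from `A` by a deletion `ψ(i,j)`: the segment `(A_i … A_j)`,
consisting only of `α`-elements, is removed. -/
def DelN (A A' : List Gene) : Prop :=
  ∃ i j : ℕ, 1 ≤ i ∧ i ≤ j ∧ j ≤ A.length ∧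
    (∀ e ∈ (A.drop (i - 1)).take (j - i + 1), e = none) ∧
    A' = A.take (i - 1) ++ A.drop j

/-- The kinds of operations on strings. -/
inductive StrOp : Type
  | rev
  | transp
  | ins
  | del
deriving DecidableEq

def strOpRel (n : ℕ) : StrOp → List Gene → List Gene → Prop
  | StrOp.rev => RevN
  | StrOp.transp => TranspN
  | StrOp.ins => InsN n
  | StrOp.del => DelN

/-- The target string `ι^n = (1 2 … n)`. -/
def idList (n : ℕ) : List Gene := (List.range n).map (fun x => some (x + 1))

/-- `A` can be transformed into `ι^n` by a sequence of `s` operations of the model `M`. -/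
def Reaches (n : ℕ) (M : Set StrOp) : ℕ → List Gene → Prop
  | 0, A => A = idList n
  | s + 1, A => ∃ op ∈ M, ∃ A', strOpRel n op A A' ∧ Reaches n M s A'

/-- `d_M(A, ι^n)`: the minimum number of operations of the model `M` transforming
`A` into `ι^n` (`∞` if no such sequence exists). -/
noncomputable def distM (n : ℕ) (M : Set StrOp) (A : List Gene) : ℕ∞ :=
  sInf {c : ℕ∞ | ∃ s : ℕ, Reaches n M s A ∧ c = (s : ℕ∞)}

/-- The model `M^{φψ}_ρ`: reversals, insertions and deletions. -/
def Mrev : Set StrOp := {StrOp.rev, StrOp.ins, StrOp.del}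
/-- The model `M^{φψ}_τ`: transpositions, insertions and deletions. -/
def Mtra : Set StrOp := {StrOp.transp, StrOp.ins, StrOp.del}
/-- The model `M^{φψ}_{ρ,τ}`: reversals, transpositions, insertions and deletions. -/
def Mrevtra : Set StrOp := {StrOp.rev, StrOp.transp, StrOp.ins, StrOp.del}

/-- `(u, v)` is an unsigned-reversal breakpoint of the instance `I = (A, ι^n)`. -/
def IsBreakR (n : ℕ) (A : List Gene) (u v : Gene) : Prop :=
  v ≠ postOf n A u ∧ v ≠ antOf n A u

/-- `A` has at least one decreasing strip: either some non-breakpoint adjacency is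
decreasing (the right element is the anterior of the left one), or some interior
non-`α` element is a singleton strip (it has breakpoints on both sides). -/
def HasDecStrip (n : ℕ) (A : List Gene) : Prop :=
  (∃ t : ℕ, t + 1 < (extStr n A).length ∧
    (extStr n A).getD t none ≠ none ∧
    (extStr n A).getD (t + 1) none = antOf n A ((extStr n A).getD t none)) ∨
  (∃ t : ℕ, 1 ≤ t ∧ t + 1 < (extStr n A).length ∧
    (extStr n A).getD t none ≠ none ∧
    IsBreakR n A ((extStr n A).getD (t - 1) none) ((extStr n A).getD t none) ∧
    IsBreakR n A ((extStr n A).getD t none) ((extStr n A).getD (t + 1) none))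

/-!
Every valid `A ≠ ι^n` admits one operation of `M^{φψ}_τ` lowering `b_τ + |Σ_{ι^n} \ Σ_A|`.
If `A` contains `α`, deleting a maximal run of `α`s removes the two breakpoints around it and
creates at most one. If `A` has no `α` but has a breakpoint, let `u` end the initial strip
`0, post 0, …, u` of the extended string and `z` follow it; `y = post u` lies to the right of
`z`, and moving the strip `y … w` just after `u` replaces the three breakpoints `(u, z)`,
`(p, y)`, `(w, s)` at the cuts by at most two. Here `(p, y)` is a breakpoint because `post` is
injective, and the strip of `y` cannot reach `n + 1`, since it would then contain `z`. If `A`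
has neither `α` nor breakpoints, its extension is increasing, so a missing label can be inserted
at its sorted position without creating a breakpoint.
-/

lemma List.exists_isChain_prefix {α : Type*} (R : α → α → Prop) {l : List α} (hl : l ≠ []) :
    ∃ c a r, l = c ++ a :: r ∧ (c ++ [a]).IsChain R ∧ ∀ b ∈ r.head?, ¬ R a b := by
  induction l using List.twoStepInduction with
  | nil => exact absurd rfl hl
  | singleton a => exact ⟨[], a, [], rfl, by simp, by simp⟩
  | cons_cons a b t _ ih =>
    by_cases hab : R a b
    · obtain ⟨c, a', r, heq, hc, hr⟩ := ih b (List.cons_ne_nil _ _)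
      refine ⟨a :: c, a', r, by simp [heq], ?_, hr⟩
      cases c <;> simp_all
    · exact ⟨[], a, b :: t, rfl, by simp, by simpa using hab⟩

lemma List.mem_of_append_eq_concat {α : Type*} {L K J : List α} {a : α} (h : L ++ K = J ++ [a])
    (hK : K ≠ []) : a ∈ K :=
  List.mem_of_getLast? (by rw [← List.getLast?_append_of_ne_nil L hK, h, List.getLast?_concat])

lemma eq_append_of_frame_eq {α : Type*} {m M : α} {D C X Y T : List α}
    (h : m :: (D ++ [M]) = C ++ (X ++ (Y ++ T))) (hC : C ≠ []) (hT : T ≠ []) :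
    ∃ P Q, C = m :: P ∧ T = Q ++ [M] ∧ D = P ++ X ++ Y ++ Q := by
  obtain ⟨c, P, rfl⟩ := List.exists_cons_of_ne_nil hC
  rw [← List.dropLast_append_getLast hT] at h ⊢
  simp only [List.cons_append, List.cons.injEq] at h
  obtain ⟨rfl, h⟩ := h
  have h' : D ++ [M] = (P ++ X ++ Y ++ T.dropLast) ++ [T.getLast hT] := by rw [h]; simp
  obtain ⟨hD, hM⟩ := List.append_inj' h' rfl
  exact ⟨P, T.dropLast, rfl, by rw [← hM], hD⟩

section BreakCount

variable {α : Type*} [DecidableEq α] (f : α → α)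

def breakCount : List α → ℕ
  | a :: b :: l => (if f a = b then 0 else 1) + breakCount (b :: l)
  | _ => 0

@[simp] lemma breakCount_nil : breakCount f [] = 0 := rfl

@[simp] lemma breakCount_singleton (a : α) : breakCount f [a] = 0 := rfl

@[simp] lemma breakCount_cons_cons (a b : α) (l : List α) :
    breakCount f (a :: b :: l) = (if f a = b then 0 else 1) + breakCount f (b :: l) := rfl

lemma breakCount_append_cons (l₁ : List α) (a : α) (l₂ : List α) :
    breakCount f (l₁ ++ a :: l₂) = breakCount f (l₁ ++ [a]) + breakCount f (a :: l₂) := by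
  induction l₁ using List.twoStepInduction with
  | nil => simp
  | singleton => simp
  | cons_cons x y l₁ _ ih =>
    simp only [List.cons_append, breakCount_cons_cons] at ih ⊢
    rw [ih y, Nat.add_assoc]

lemma breakCount_append {l₁ l₂ : List α} (h₁ : l₁ ≠ []) (h₂ : l₂ ≠ []) :
    breakCount f (l₁ ++ l₂) = breakCount f l₁ +
      (if f (l₁.getLast h₁) = l₂.head h₂ then 0 else 1) + breakCount f l₂ := by
  obtain ⟨b, l₂, rfl⟩ := List.exists_cons_of_ne_nil h₂
  conv_lhs => rw [← List.dropLast_append_getLast h₁, List.append_assoc, List.singleton_append,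
    breakCount_append_cons, List.dropLast_append_getLast h₁, breakCount_cons_cons]
  simp only [List.head_cons, Nat.add_assoc]
  rfl

lemma breakCount_append_lt_append_append {P N Q : List α} (hP : P ≠ []) (hN : N ≠ [])
    (hQ : Q ≠ []) (hPN : f (P.getLast hP) ≠ N.head hN) (hNQ : f (N.getLast hN) ≠ Q.head hQ) :
    breakCount f (P ++ Q) < breakCount f (P ++ (N ++ Q)) := by
  rw [breakCount_append f hP hQ, breakCount_append f hP (by simp [hN]),
    breakCount_append f hN hQ, List.head_append_of_ne_nil hN, if_neg hPN, if_neg hNQ]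
  split <;> omega

lemma breakCount_append_swap_lt {C X Y T : List α} (hC : C ≠ []) (hX : X ≠ []) (hY : Y ≠ [])
    (hT : T ≠ []) (hCX : f (C.getLast hC) ≠ X.head hX) (hXY : f (X.getLast hX) ≠ Y.head hY)
    (hYT : f (Y.getLast hY) ≠ T.head hT) (hCY : f (C.getLast hC) = Y.head hY) :
    breakCount f (C ++ (Y ++ (X ++ T))) < breakCount f (C ++ (X ++ (Y ++ T))) := by
  rw [breakCount_append f hC (by simp [hX]), breakCount_append f hC (by simp [hY]),
    breakCount_append f hX (by simp [hY]), breakCount_append f hY (by simp [hX]),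
    breakCount_append f hX hT, breakCount_append f hY hT]
  simp only [List.head_append_of_ne_nil hX, List.head_append_of_ne_nil hY, if_neg hCX,
    if_neg hXY, if_neg hYT, if_pos hCY]
  split <;> split <;> omega

lemma breakCount_eq_zero_iff_isChain {l : List α} :
    breakCount f l = 0 ↔ l.IsChain (fun a b => f a = b) := by
  induction l using List.twoStepInduction with
  | nil | singleton => simp
  | cons_cons a b l _ ih => simp [ih]

lemma breakCount_map {β : Type*} [DecidableEq β] {g : β → α} (hg : g.Injective) (f' : β → β)
    (hf : ∀ x, f (g x) = g (f' x)) (l : List β) :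
    breakCount f (l.map g) = breakCount f' l := by
  induction l using List.twoStepInduction with
  | nil | singleton => simp
  | cons_cons a b l _ ih => simp_all [hg.eq_iff]

lemma card_filter_range_eq_breakCount (d : α) (l : List α) :
    ((Finset.range (l.length - 1)).filter
      (fun t => l.getD (t + 1) d ≠ f (l.getD t d))).card = breakCount f l := by
  induction l using List.twoStepInduction with
  | nil | singleton => simp
  | cons_cons a b l _ ih =>
    rw [Finset.card_filter, breakCount_cons_cons, ← ih, Finset.card_filter]
    simp only [List.length_cons, Nat.add_sub_cancel] at ih ⊢
    rw [Finset.sum_range_succ', Nat.add_comm]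
    simp [eq_comm (a := b)]

end BreakCount

section Successor

variable {α : Type*} [LinearOrder α] {f : α → α} {s : Set α} {M : α}

lemma isChain_lt_of_isChain_succ (hf : ∀ x < M, IsLeast {z | z ∈ s ∧ x < z} (f x))
    {L : List α} (hL : L.IsChain (fun a b => f a = b)) (hLM : ∀ x ∈ L, x < M) :
    L.IsChain (· < ·) := by
  rw [List.isChain_iff_forall_rel_of_append_cons_cons] at hL ⊢
  intro a b l₁ l₂ hl
  rw [← hL hl]
  exact (hf a (hLM a (by simp [hl]))).1.2

lemma mem_of_isChain_succ (hf : ∀ x < M, IsLeast {z | z ∈ s ∧ x < z} (f x))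
    (hsM : ∀ z ∈ s, z ≤ M) {g : α} (hg : g ∈ s) :
    ∀ {h : α} {L : List α}, (h :: L).IsChain (fun a b => f a = b) → h < g →
      ∀ x ∈ h :: L, g ≤ x → g ∈ h :: L := by
  intro h L
  induction L generalizing h with
  | nil => intro _ hhg x hx hgx; simp_all [not_le.mpr hhg]
  | cons h' L ih =>
    intro hL hhg x hx hgx
    rw [List.isChain_cons_cons] at hL
    have hh'g : h' ≤ g := hL.1 ▸ (hf h (hhg.trans_le (hsM g hg))).2 ⟨hg, hhg⟩
    rcases hh'g.lt_or_eq with hlt | rfl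
    · have hx' : x ∈ h' :: L := by
        rcases List.mem_cons.mp hx with rfl | hx'
        · exact absurd hgx (not_le.mpr hhg)
        · exact hx'
      exact List.mem_cons_of_mem _ (ih hL.2 hlt x hx' hgx)
    · simp

lemma succ_injOn (hf : ∀ x < M, IsLeast {z | z ∈ s ∧ x < z} (f x)) {p u : α} (hp : p ∈ s)
    (hu : u ∈ s) (hpM : p < M) (huM : u < M) (hpu : f p = f u) : p = u := by
  by_contra hne
  rcases lt_or_gt_of_ne hne with hlt | hlt
  · exact absurd ((hf p hpM).2 ⟨hu, hlt⟩) (not_le.mpr (hpu ▸ (hf u huM).1.2))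
  · exact absurd ((hf u huM).2 ⟨hp, hlt⟩) (not_le.mpr (hpu ▸ (hf p hpM).1.2))

end Successor

/-- `m :: (D ++ [M])` stands for an extended string, framed by its minimum `m` and maximum `M`,
and `f` is its successor map below `M`. -/
structure IsSuccFrame {α : Type*} [LinearOrder α] (f : α → α) (m : α) (D : List α) (M : α) :
    Prop where
  bounds : ∀ x ∈ D, m < x ∧ x < M
  lt : m < M
  isLeast : ∀ x < M, IsLeast {z | z ∈ m :: (D ++ [M]) ∧ x < z} (f x)

namespace IsSuccFrame

variable {α : Type*} [LinearOrder α] {f : α → α} {m M : α} {D : List α}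

lemma bounds_of_mem (hF : IsSuccFrame f m D M) :
    ∀ z ∈ m :: (D ++ [M]), m ≤ z ∧ z ≤ M := by
  intro z hz
  simp only [List.mem_cons, List.mem_append, List.not_mem_nil, or_false] at hz
  rcases hz with rfl | hz | rfl
  · exact ⟨le_rfl, hF.lt.le⟩
  · exact ⟨(hF.bounds z hz).1.le, (hF.bounds z hz).2.le⟩
  · exact ⟨hF.lt.le, le_rfl⟩

lemma breakCount_eq_zero_iff_sortedLT (hF : IsSuccFrame f m D M) :
    breakCount f (m :: (D ++ [M])) = 0 ↔ D.SortedLT := by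
  rw [breakCount_eq_zero_iff_isChain, List.sortedLT_iff_pairwise]
  constructor
  · intro hE
    rw [← List.cons_append, List.isChain_append] at hE
    have hlt : ∀ x ∈ m :: D, x < M := by
      simpa [hF.lt] using fun x hx => (hF.bounds x hx).2
    exact (List.pairwise_cons.mp
      (List.isChain_iff_pairwise.mp (isChain_lt_of_isChain_succ hF.isLeast hE.1 hlt))).2
  · intro hsort
    have hE : (m :: (D ++ [M])).Pairwise (· < ·) := by
      simp only [List.pairwise_cons, List.pairwise_append, List.mem_append, List.mem_singleton]
      refine ⟨?_, hsort, by simp, fun a ha b hb => hb ▸ (hF.bounds a ha).2⟩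
      rintro a (ha | rfl)
      exacts [(hF.bounds a ha).1, hF.lt]
    rw [List.isChain_iff_forall_rel_of_append_cons_cons]
    intro a b l₁ l₂ hl
    rw [hl, List.pairwise_append, List.pairwise_cons, List.pairwise_cons] at hE
    have hab : a < b := hE.2.1.1 b (by simp)
    have hbM : b ≤ M := (hF.bounds_of_mem b (by simp [hl])).2
    refine (hF.isLeast a (hab.trans_le hbM)).unique ⟨⟨by simp [hl], hab⟩, ?_⟩
    rintro z ⟨hz, haz⟩
    rw [hl] at hz
    simp only [List.mem_append, List.mem_cons] at hz
    rcases hz with hz | rfl | rfl | hz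
    · exact absurd (hE.2.2 z hz a (by simp)) (not_lt.mpr haz.le)
    · exact absurd haz (lt_irrefl _)
    · exact le_rfl
    · exact (hE.2.1.2.1 z hz).le

lemma nodup (hF : IsSuccFrame f m D M) (hnd : D.Nodup) :
    (m :: (D ++ [M])).Nodup := by
  refine List.nodup_cons.mpr ⟨?_, hnd.append (List.nodup_singleton M) ?_⟩
  · simpa [hF.lt.ne] using fun h => lt_irrefl m (hF.bounds m h).1
  · simpa using fun h => lt_irrefl M (hF.bounds M h).2

lemma lt_of_mem_of_eq_append (hF : IsSuccFrame f m D M) (hnd : D.Nodup) {L K : List α}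
    (hE : m :: (D ++ [M]) = L ++ K) (hK : K ≠ []) {x : α} (hx : x ∈ L) : x < M := by
  have hM : M ∈ K := List.mem_of_append_eq_concat (hE.symm.trans (List.cons_append ..).symm) hK
  have hdisj := (List.nodup_append.mp (hE ▸ hF.nodup hnd)).2.2
  exact lt_of_le_of_ne (hF.bounds_of_mem x (hE ▸ List.mem_append_left K hx)).2 (hdisj x hx M hM)

lemma succ_mem_of_first_break (hF : IsSuccFrame f m D M) (hnd : D.Nodup) {c r : List α}
    {u z : α} (heq : m :: (D ++ [M]) = c ++ u :: z :: r)
    (hc : (c ++ [u]).IsChain (fun a b => f a = b)) (huz : f u ≠ z) : f u < z ∧ f u ∈ r := by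
  have hb := hF.bounds_of_mem
  have heq' : m :: (D ++ [M]) = c ++ [u] ++ z :: r := by simp [heq]
  have hdisj := (List.nodup_append.mp (heq' ▸ hF.nodup hnd)).2.2
  have hmem : ∀ x, x ∈ c ++ [u] ∨ x ∈ z :: r ↔ x ∈ m :: (D ++ [M]) := fun x => by
    rw [← List.mem_append, heq']
  have hCM : ∀ x ∈ c ++ [u], x < M := fun x hx =>
    hF.lt_of_mem_of_eq_append hnd heq' (List.cons_ne_nil z r) hx
  obtain ⟨L, hL⟩ : ∃ L, c ++ [u] = m :: L := by
    cases c with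
    | nil => exact ⟨[], by simp_all⟩
    | cons c₀ c => exact ⟨c ++ [u], by simp_all⟩
  have hzE := (hmem z).mp (Or.inr (by simp))
  have hzC : z ∉ c ++ [u] := fun hz => hdisj z hz z (by simp) rfl
  have hmz : m < z := lt_of_le_of_ne (hb z hzE).1 fun h => hzC (by simp [hL, h])
  have huz' : u < z := by
    refine lt_of_not_ge fun hzu => hzC ?_
    rw [hL] at hc ⊢
    exact mem_of_isChain_succ hF.isLeast (fun z hz => (hb z hz).2) hzE hc hmz u
      (by simp [← hL]) hzu
  obtain ⟨⟨hyE, huy⟩, hyl⟩ := hF.isLeast u (hCM u (by simp))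
  have hyz : f u < z := lt_of_le_of_ne (hyl ⟨hzE, huz'⟩) huz
  refine ⟨hyz, ?_⟩
  have hyC : f u ∉ c ++ [u] := by
    intro hy
    have hinc := List.isChain_iff_pairwise.mp (isChain_lt_of_isChain_succ hF.isLeast hc hCM)
    rw [List.pairwise_append] at hinc
    rcases List.mem_append.mp hy with hy | hy
    · exact lt_asymm huy (hinc.2.2 _ hy u (by simp))
    · exact lt_irrefl u (by rwa [List.mem_singleton.mp hy] at huy)
  rcases (hmem (f u)).mpr hyE with hy | hy
  · exact absurd hy hyC
  · exact (List.mem_cons.mp hy).resolve_left hyz.ne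

lemma exists_second_break (hF : IsSuccFrame f m D M) (hnd : D.Nodup) {c B R : List α} {u z : α}
    (heq : m :: (D ++ [M]) = c ++ u :: z :: (B ++ f u :: R)) (hyz : f u < z) :
    ∃ c₂ w s S, f u :: R = c₂ ++ w :: s :: S ∧ (c₂ ++ [w]).IsChain (fun a b => f a = b) ∧
      f w ≠ s := by
  obtain ⟨c₂, w, r₂, heq₂, hc₂, hr₂⟩ :=
    List.exists_isChain_prefix (fun a b => f a = b) (List.cons_ne_nil (f u) R)
  cases r₂ with
  | cons s S => exact ⟨c₂, w, s, S, heq₂, hc₂, by simpa using hr₂⟩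
  | nil =>
    have heq' : (c ++ u :: z :: B) ++ (f u :: R) = (m :: D) ++ [M] := by
      rw [List.cons_append, heq]; simp
    have hnodup := hF.nodup hnd
    rw [← List.cons_append, ← heq'] at hnodup
    have hdisj := (List.nodup_append.mp hnodup).2.2
    have hb := hF.bounds_of_mem
    have hzE : z ∈ m :: (D ++ [M]) := by rw [heq]; simp
    have hchain : (f u :: R).IsChain (fun a b => f a = b) := by rw [heq₂]; exact hc₂
    have hzR := mem_of_isChain_succ hF.isLeast (fun z hz => (hb z hz).2) hzE hchain hyz M
      (List.mem_of_append_eq_concat heq' (List.cons_ne_nil _ _)) (hb z hzE).2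
    exact absurd rfl (hdisj z (by simp) z hzR)

lemma succ_ne_succ_of_mem_append (hF : IsSuccFrame f m D M) (hnd : D.Nodup) {C X T : List α}
    {p u : α} (hE : m :: (D ++ [M]) = C ++ (X ++ T)) (hT : T ≠ []) (hu : u ∈ C) (hp : p ∈ X) :
    f p ≠ f u := by
  have hE' : m :: (D ++ [M]) = (C ++ X) ++ T := by rw [hE, List.append_assoc]
  have hpM := hF.lt_of_mem_of_eq_append hnd hE' hT (List.mem_append_right C hp)
  have huM := hF.lt_of_mem_of_eq_append hnd hE' hT (List.mem_append_left X hu)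
  have hmemE : ∀ x ∈ C ++ X, x ∈ m :: (D ++ [M]) := fun x hx => hE' ▸ List.mem_append_left T hx
  have hdisj := (List.nodup_append.mp (hE ▸ hF.nodup hnd)).2.2
  exact fun hpu => hdisj u hu p (List.mem_append_left T hp) (succ_injOn hF.isLeast
    (hmemE p (List.mem_append_right C hp)) (hmemE u (List.mem_append_left X hu)) hpM huM hpu).symm

lemma exists_swap_breakCount_lt (hF : IsSuccFrame f m D M) (hnd : D.Nodup)
    (hbc : breakCount f (m :: (D ++ [M])) ≠ 0) :
    ∃ P X Y Q, D = P ++ X ++ Y ++ Q ∧ X ≠ [] ∧ Y ≠ [] ∧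
      breakCount f (m :: (P ++ Y ++ X ++ Q ++ [M])) < breakCount f (m :: (D ++ [M])) := by
  obtain ⟨c, u, r, heq, hc, hr⟩ :=
    List.exists_isChain_prefix (fun a b => f a = b) (List.cons_ne_nil m (D ++ [M]))
  obtain ⟨z, r, rfl⟩ : ∃ z r', r = z :: r' := by
    cases r with
    | nil => exact absurd ((breakCount_eq_zero_iff_isChain f).mpr (heq ▸ hc)) hbc
    | cons z r => exact ⟨z, r, rfl⟩
  have huz : f u ≠ z := by simpa using hr
  obtain ⟨hyz, hyr⟩ := hF.succ_mem_of_first_break hnd heq hc huz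
  obtain ⟨B, R, rfl⟩ := List.append_of_mem hyr
  obtain ⟨c₂, w, s, S, heq₂, hc₂, hws⟩ := hF.exists_second_break hnd heq hyz
  have hE : m :: (D ++ [M]) = (c ++ [u]) ++ ((z :: B) ++ ((c₂ ++ [w]) ++ (s :: S))) := by
    rw [heq, heq₂]; simp
  have hYhead : (c₂ ++ [w]).head (by simp) = f u := by
    cases c₂ <;> simp_all
  have hfp := hF.succ_ne_succ_of_mem_append hnd hE (by simp) (by simp : u ∈ c ++ [u])
    (List.getLast_mem (List.cons_ne_nil z B))
  obtain ⟨P, Q, hP, hQ, hD⟩ := eq_append_of_frame_eq hE (by simp) (List.cons_ne_nil s S)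
  refine ⟨P, z :: B, c₂ ++ [w], Q, hD, List.cons_ne_nil z B, by simp, ?_⟩
  have hE' : m :: (P ++ (c₂ ++ [w]) ++ (z :: B) ++ Q ++ [M])
      = (c ++ [u]) ++ ((c₂ ++ [w]) ++ ((z :: B) ++ (s :: S))) := by
    rw [hP, hQ]; simp
  rw [hE', hE]
  refine breakCount_append_swap_lt f (by simp) (by simp) (by simp) (by simp) ?_ ?_ ?_ ?_
  · simpa using huz
  · rwa [hYhead]
  · simpa using hws
  · simp [hYhead]

end IsSuccFrame

def postLabel (n : ℕ) (A : List Gene) (x : ℕ) : ℕ := (postOf n A (some x)).getD 0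

lemma postOf_some (n : ℕ) (A : List Gene) (x : ℕ) :
    postOf n A (some x) = some (postLabel n A x) := by
  simp only [postLabel, postOf]
  split <;> rfl

lemma isLeast_postLabel {n x : ℕ} {a : List ℕ} (ha : ∀ y ∈ a, y ≤ n) (hx : x < n + 1) :
    IsLeast {z | z ∈ 0 :: (a ++ [n + 1]) ∧ x < z} (postLabel n (a.map some) x) := by
  simp only [postLabel, postOf]
  split
  case isTrue hne =>
    have hmin := Finset.mem_filter.mp (Finset.min'_mem _ hne)
    refine ⟨⟨by simpa using Or.inr (Or.inl hmin.2.1), hmin.2.2⟩, ?_⟩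
    rintro z ⟨hz, hxz⟩
    simp only [List.mem_cons, List.mem_append, List.not_mem_nil, or_false] at hz
    rcases hz with rfl | hz | rfl
    · omega
    · exact Finset.min'_le _ _ (Finset.mem_filter.mpr
        ⟨Finset.mem_Icc.mpr ⟨by omega, ha z hz⟩, by simpa using hz, hxz⟩)
    · have := Finset.mem_Icc.mp hmin.1
      simp only [Option.getD_some]
      omega
  case isFalse hne =>
    refine ⟨⟨by simp, hx⟩, ?_⟩
    rintro z ⟨hz, hxz⟩
    simp only [List.mem_cons, List.mem_append, List.not_mem_nil, or_false] at hz
    rcases hz with rfl | hz | rfl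
    · omega
    · exact absurd ⟨z, Finset.mem_filter.mpr
        ⟨Finset.mem_Icc.mpr ⟨by omega, ha z hz⟩, by simpa using hz, hxz⟩⟩ hne
    · exact le_rfl

lemma isSuccFrame_postLabel {n : ℕ} {a : List ℕ} (ha : ∀ x ∈ a, 1 ≤ x ∧ x ≤ n) :
    IsSuccFrame (postLabel n (a.map some)) 0 a (n + 1) :=
  ⟨fun x hx => ⟨(ha x hx).1, Nat.lt_succ_of_le (ha x hx).2⟩, Nat.zero_lt_succ n,
    fun _ hx => isLeast_postLabel (fun y hy => (ha y hy).2) hx⟩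

lemma postOf_congr {n : ℕ} {A A' : List Gene} (h : ∀ x : ℕ, some x ∈ A ↔ some x ∈ A') :
    postOf n A = postOf n A' := by
  funext g
  cases g with
  | none => rfl
  | some x => simp only [postOf, h]

lemma missingCount_congr {n : ℕ} {A A' : List Gene} (h : ∀ x : ℕ, some x ∈ A ↔ some x ∈ A') :
    missingCount n A = missingCount n A' := by
  simp only [missingCount, h]

lemma bT_eq_breakCount (n : ℕ) (A : List Gene) :
    bT n A = breakCount (postOf n A) (extStr n A) := by
  rw [← card_filter_range_eq_breakCount _ none]
  simp [bT, extStr]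

lemma bT_map_some (n : ℕ) (a : List ℕ) :
    bT n (a.map some) = breakCount (postLabel n (a.map some)) (0 :: (a ++ [n + 1])) := by
  rw [bT_eq_breakCount, ← breakCount_map _ (Option.some_injective ℕ) _ (postOf_some n _)]
  simp [extStr]

lemma validString_map_some_iff {n : ℕ} {a : List ℕ} :
    ValidString n (a.map some) ↔ (∀ x ∈ a, 1 ≤ x ∧ x ≤ n) ∧ a.Nodup := by
  simp [ValidString, List.count_map_of_injective _ _ (Option.some_injective ℕ),
    List.nodup_iff_count_le_one]

lemma ValidString.of_perm {n : ℕ} {A A' : List Gene} (hA : ValidString n A) (h : A'.Perm A) :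
    ValidString n A' :=
  ⟨fun x hx => hA.1 x (h.mem_iff.mp hx), fun x => h.count_eq (some x) ▸ hA.2 x⟩

lemma ValidString.of_sublist {n : ℕ} {A A' : List Gene} (hA : ValidString n A) (h : A'.Sublist A) :
    ValidString n A' :=
  ⟨fun x hx => hA.1 x (h.subset hx), fun x => (h.count_le (some x)).trans (hA.2 x)⟩

lemma exists_eq_map_some {A : List Gene} (h : none ∉ A) : ∃ a : List ℕ, A = a.map some := by
  induction A with
  | nil => exact ⟨[], rfl⟩
  | cons g A ih =>
    obtain ⟨a, rfl⟩ := ih (fun hA => h (List.mem_cons_of_mem g hA))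
    obtain ⟨x, rfl⟩ := Option.ne_none_iff_exists'.mp (fun hg => h (hg ▸ List.mem_cons_self))
    exact ⟨x :: a, rfl⟩

lemma transpN_append {P X Y Q : List Gene} (hX : X ≠ []) (hY : Y ≠ []) :
    TranspN (P ++ X ++ Y ++ Q) (P ++ Y ++ X ++ Q) := by
  have hX' := List.length_pos_iff.mpr hX
  have hY' := List.length_pos_iff.mpr hY
  refine ⟨P.length + 1, P.length + X.length + 1, P.length + X.length + Y.length + 1,
    by omega, by omega, by omega, by simp; omega, ?_⟩
  rw [show P.length + 1 - 1 = P.length by omega,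
    show P.length + X.length + 1 - 1 = P.length + X.length by omega,
    show P.length + X.length + Y.length + 1 - (P.length + X.length + 1) = Y.length by omega,
    show P.length + X.length + 1 - (P.length + 1) = X.length by omega,
    show P.length + X.length + Y.length + 1 - 1 = P.length + X.length + Y.length by omega,
    show (P ++ X ++ Y ++ Q).drop (P.length + X.length) = Y ++ Q by simp [List.drop_append],
    ← List.length_append, ← List.length_append, List.drop_left]
  simp

lemma delN_append {P N Q : List Gene} (hN : N ≠ []) (hnone : ∀ e ∈ N, e = none) :
    DelN (P ++ N ++ Q) (P ++ Q) := by
  have hN' := List.length_pos_iff.mpr hN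
  refine ⟨P.length + 1, P.length + N.length, by omega, by omega, by simp, ?_, ?_⟩
  · simpa [List.drop_append, List.take_append, List.take_of_length_le,
      show P.length + N.length - (P.length + 1) + 1 = N.length by omega] using hnone
  · simp [List.drop_append]

lemma insN_append {n x : ℕ} {P Q : List Gene} (hx : 1 ≤ x ∧ x ≤ n) (hxPQ : some x ∉ P ++ Q) :
    InsN n (P ++ Q) (P ++ some x :: Q) :=
  ⟨P.length, [some x], by simp, by simp, by simp,
    fun e he => ⟨x, List.mem_singleton.mp he, hx.1, hx.2, hxPQ⟩, by simp⟩

lemma exists_none_run {A : List Gene} (h : none ∈ A) :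
    ∃ X N Y, A = X ++ N ++ Y ∧ N ≠ [] ∧ (∀ e ∈ N, e = none) ∧ none ∉ X ∧ none ∉ Y.head? := by
  induction A with
  | nil => simp at h
  | cons g A ih =>
    cases g with
    | none =>
      refine ⟨[], none :: A.takeWhile Option.isNone, A.dropWhile Option.isNone,
        by simp [List.takeWhile_append_dropWhile], by simp, ?_, by simp, fun hY => ?_⟩
      · rintro e (_ | ⟨_, he⟩)
        · rfl
        · exact Option.isNone_iff_eq_none.mp (List.mem_takeWhile_imp he)
      · have := List.head?_dropWhile_not Option.isNone A
        rw [Option.mem_def.mp hY] at this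
        simp at this
    | some x =>
      obtain ⟨X, N, Y, rfl, hN, hNn, hX, hY⟩ := ih (by simpa using h)
      exact ⟨some x :: X, N, Y, rfl, hN, hNn, by simpa using hX, hY⟩

lemma exists_delN_bT_lt {n : ℕ} {A : List Gene} (hA : ValidString n A) (h : none ∈ A) :
    ∃ A', DelN A A' ∧ ValidString n A' ∧ missingCount n A' = missingCount n A ∧
      bT n A' < bT n A := by
  obtain ⟨X, N, Y, rfl, hN, hNn, hX, hY⟩ := exists_none_run h
  have hmem : ∀ x : ℕ, some x ∈ X ++ Y ↔ some x ∈ X ++ N ++ Y := fun x => by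
    simp only [List.mem_append]
    refine ⟨by tauto, ?_⟩
    rintro ((h | h) | h)
    exacts [Or.inl h, absurd (hNn _ h) (by simp), Or.inr h]
  refine ⟨X ++ Y, delN_append hN hNn, hA.of_sublist (by simp), missingCount_congr hmem, ?_⟩
  have hP : some 0 :: X ≠ [] := List.cons_ne_nil _ _
  have hQ : Y ++ [some (n + 1)] ≠ [] := by simp
  have hlast : (some 0 :: X).getLast hP ≠ none := fun hl =>
    hX (by simpa [hl] using List.getLast_mem hP)
  have hhead : (Y ++ [some (n + 1)]).head hQ ≠ none := by
    cases Y <;> simp_all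
  rw [bT_eq_breakCount, bT_eq_breakCount, postOf_congr hmem]
  convert breakCount_append_lt_append_append (postOf n (X ++ N ++ Y)) hP hN hQ ?_ ?_ using 2
  · simp [extStr]
  · simp [extStr]
  · obtain ⟨x, hx⟩ := Option.ne_none_iff_exists'.mp hlast
    rw [hx, postOf_some, hNn _ (List.head_mem hN)]
    simp
  · rw [hNn _ (List.getLast_mem hN)]
    exact fun h => hhead h.symm

lemma bT_map_some_eq_zero_iff {n : ℕ} {a : List ℕ} (ha : ∀ x ∈ a, 1 ≤ x ∧ x ≤ n) :
    bT n (a.map some) = 0 ↔ a.SortedLT := by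
  rw [bT_map_some]
  exact (isSuccFrame_postLabel ha).breakCount_eq_zero_iff_sortedLT

lemma missingCount_lt {n x : ℕ} {A A' : List Gene} (hAA' : ∀ y : ℕ, some y ∈ A → some y ∈ A')
    (hx : 1 ≤ x ∧ x ≤ n) (hxA : some x ∉ A) (hxA' : some x ∈ A') :
    missingCount n A' < missingCount n A := by
  refine Finset.card_lt_card ⟨fun y hy => ?_, fun hsub => ?_⟩
  · simp only [Finset.mem_filter] at hy ⊢
    exact ⟨hy.1, fun h => hy.2 (hAA' y h)⟩
  · have := hsub (Finset.mem_filter.mpr ⟨Finset.mem_Icc.mpr hx, hxA⟩)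
    exact (Finset.mem_filter.mp this).2 hxA'

lemma idList_eq_map_range' (n : ℕ) : idList n = (List.range' 1 n).map some := by
  simp [idList, List.range'_eq_map_range, Nat.add_comm]

lemma exists_insN_of_sortedLT {n : ℕ} {a : List ℕ} (ha : ∀ x ∈ a, 1 ≤ x ∧ x ≤ n)
    (hsort : a.SortedLT) (hne : a.map some ≠ idList n) :
    ∃ A', InsN n (a.map some) A' ∧ ValidString n A' ∧ bT n A' = 0 ∧
      missingCount n A' < missingCount n (a.map some) := by
  obtain ⟨x, hx, hxa⟩ : ∃ x, (1 ≤ x ∧ x ≤ n) ∧ x ∉ a := by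
    by_contra! hall
    refine hne ((congrArg (List.map some) (hsort.eq_of_mem_iff (List.sortedLT_range' 1 n
      one_ne_zero) fun y => ?_)).trans (idList_eq_map_range' n).symm)
    simp only [List.mem_range'_1]
    exact ⟨fun hy => by have := ha y hy; omega, fun hy => hall y (by omega)⟩
  set a' := a.orderedInsert (· ≤ ·) x
  have hperm : a'.Perm (x :: a) := List.perm_orderedInsert _ x a
  have ha' : ∀ y ∈ a', 1 ≤ y ∧ y ≤ n := fun y hy => by
    rcases List.mem_cons.mp (hperm.subset hy) with rfl | hy
    exacts [hx, ha y hy]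
  have hnd' : a'.Nodup := hperm.nodup_iff.mpr (List.nodup_cons.mpr ⟨hxa, hsort.nodup⟩)
  refine ⟨a'.map some, ?_, validString_map_some_iff.mpr ⟨ha', hnd'⟩,
    (bT_map_some_eq_zero_iff ha').mpr (List.SortedLE.sortedLT_of_nodup
      (List.sortedLE_iff_pairwise.mpr ((List.sortedLE_iff_pairwise.mp hsort.sortedLE).orderedInsert
        x a)) hnd'),
    missingCount_lt (fun y hy => ?_) hx (by simpa using hxa) (by simp [a', List.mem_orderedInsert])⟩
  · rw [show a' = _ from List.orderedInsert_eq_take_drop _ x a]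
    have h := insN_append (P := (a.takeWhile fun b => decide ¬x ≤ b).map some)
      (Q := (a.dropWhile fun b => decide ¬x ≤ b).map some) hx
      (by rw [← List.map_append, List.takeWhile_append_dropWhile]; simpa using hxa)
    rwa [← List.map_append, List.takeWhile_append_dropWhile, ← List.map_cons,
      ← List.map_append] at h
  · simp only [List.mem_map, Option.some.injEq, exists_eq_right] at hy ⊢
    exact hperm.symm.subset (List.mem_cons_of_mem x hy)

lemma exists_transpN_bT_lt {n : ℕ} {a : List ℕ} (ha : ∀ x ∈ a, 1 ≤ x ∧ x ≤ n) (hnd : a.Nodup)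
    (hbt : bT n (a.map some) ≠ 0) :
    ∃ A', TranspN (a.map some) A' ∧ ValidString n A' ∧
      missingCount n A' = missingCount n (a.map some) ∧ bT n A' < bT n (a.map some) := by
  rw [bT_map_some] at hbt ⊢
  obtain ⟨P, X, Y, Q, rfl, hX, hY, hlt⟩ :=
    (isSuccFrame_postLabel ha).exists_swap_breakCount_lt hnd hbt
  have hperm : (P ++ Y ++ X ++ Q).Perm (P ++ X ++ Y ++ Q) := by
    simpa only [List.append_assoc] using (List.perm_append_comm.append_right Q).append_left P
  have hmem : ∀ x : ℕ,
      some x ∈ (P ++ Y ++ X ++ Q).map some ↔ some x ∈ (P ++ X ++ Y ++ Q).map some :=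
    fun x => (hperm.map some).mem_iff
  have htr := transpN_append (P := P.map some) (X := X.map some) (Y := Y.map some)
    (Q := Q.map some) (by simpa using hX) (by simpa using hY)
  refine ⟨(P ++ Y ++ X ++ Q).map some, by simpa using htr,
    (validString_map_some_iff.mpr ⟨ha, hnd⟩).of_perm (hperm.map some),
    missingCount_congr hmem, ?_⟩
  have hpost :
      postLabel n ((P ++ Y ++ X ++ Q).map some) = postLabel n ((P ++ X ++ Y ++ Q).map some) :=
    funext fun x => by simp only [postLabel, postOf_congr hmem]
  rwa [bT_map_some, hpost]

lemma exists_step {n : ℕ} {A : List Gene} (hA : ValidString n A) (hne : A ≠ idList n) :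
    ∃ op ∈ Mtra, ∃ A', strOpRel n op A A' ∧ ValidString n A' ∧
      bT n A' + missingCount n A' < bT n A + missingCount n A := by
  by_cases hnone : none ∈ A
  · obtain ⟨A', hdel, hA', hmiss, hbt⟩ := exists_delN_bT_lt hA hnone
    exact ⟨StrOp.del, by simp [Mtra], A', hdel, hA', by omega⟩
  obtain ⟨a, rfl⟩ := exists_eq_map_some hnone
  obtain ⟨ha, hnd⟩ := validString_map_some_iff.mp hA
  by_cases hbt : bT n (a.map some) = 0
  · obtain ⟨A', hins, hA', hbt', hmiss⟩ :=
      exists_insN_of_sortedLT ha ((bT_map_some_eq_zero_iff ha).mp hbt) hne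
    exact ⟨StrOp.ins, by simp [Mtra], A', hins, hA', by omega⟩
  · obtain ⟨A', htr, hA', hmiss, hbt'⟩ := exists_transpN_bT_lt ha hnd hbt
    exact ⟨StrOp.transp, by simp [Mtra], A', htr, hA', by omega⟩

lemma exists_reaches_le {n : ℕ} {A : List Gene} (hA : ValidString n A) :
    ∃ s ≤ bT n A + missingCount n A, Reaches n Mtra s A := by
  induction h : bT n A + missingCount n A using Nat.strong_induction_on generalizing A with
  | _ k ih =>
    by_cases hne : A = idList n
    · exact ⟨0, Nat.zero_le _, hne⟩
    obtain ⟨op, hop, A', hrel, hA', hlt⟩ := exists_step hA hne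
    obtain ⟨s, hs, hreach⟩ := ih _ (h ▸ hlt) hA' rfl
    exact ⟨s + 1, by omega, op, hop, A', hrel, hreach⟩

/-- For every classical instance `I = (A, ι^n)` of unsigned strings,
the string `A` can be transformed into `ι^n` by a sequence of at most
`b_τ(I) + |Σ_{ι^n} \ Σ_A|` transpositions, insertions and deletions; that is,
`d_{M^{φψ}_τ}(A, ι^n) ≤ b_τ(I) + |Σ_{ι^n} \ Σ_A|`. -/
theorem transposition_indel_distance_upper_bound
    (n : ℕ) (A : List Gene) (hA : ValidString n A) :
    distM n Mtra A ≤ ((bT n A + missingCount n A : ℕ) : ℕ∞) := by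
  obtain ⟨s, hs, hreach⟩ := exists_reaches_le hA
  calc distM n Mtra A ≤ s := sInf_le ⟨s, hreach, rfl⟩
    _ ≤ _ := by exact_mod_cast hs
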